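/- arXiv:1909.07859 — 2 statements merged into one kernel-verified Lean document; each statement's English description precedes it below -/
import Mathlib

section
/- Let C : ℝⁿ → ℝ be convex and differentiable, D the incidence matrix of a connected graph on n nodes, and d ∈ ℝⁿ with 1ᵀd = 0. Then p* minimizes C over {p : 1ᵀp = 1ᵀd_total} (where the total balance 1ᵀp = Σdᵢ) if and only if there exist λ ∈ ℝⁿ and ν ∈ ℝᵐ such that ∇C(p*) = λ, Dᵀλ = 0, and Dν = p* - d. In particular, the distributed problem (OP2) is an exact relaxation of the centralized problem (OP1): every KKT point of (OP2) is optimal for (OP1). -/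
open Matrix

/-- For a convex function `φ : ℝ → ℝ` with derivative `s` at `0`,
`φ 0 + s ≤ φ 1`. -/
private lemma convex_deriv_le_aux {φ : ℝ → ℝ} (hφ : ConvexOn ℝ Set.univ φ) {s : ℝ}
    (hs : HasDerivAt φ s 0) : φ 0 + s ≤ φ 1 := by
  have h1 : Filter.Tendsto (slope φ 0) (nhdsWithin 0 {(0:ℝ)}ᶜ) (nhds s) :=
    hasDerivAt_iff_tendsto_slope.mp hs
  have h2 : Filter.Tendsto (slope φ 0) (nhdsWithin 0 (Set.Ioi (0:ℝ))) (nhds s) :=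
    h1.mono_left (nhdsWithin_mono _ (fun x hx => Set.mem_compl_singleton_iff.mpr (ne_of_gt hx)))
  have hev : ∀ᶠ x in nhdsWithin 0 (Set.Ioi (0:ℝ)), slope φ 0 x ≤ φ 1 - φ 0 := by
    have hmem : ∀ᶠ x in nhdsWithin 0 (Set.Ioi (0:ℝ)), x ∈ Set.Ioi (0:ℝ) :=
      eventually_mem_nhdsWithin
    have hlt : ∀ᶠ x in nhdsWithin 0 (Set.Ioi (0:ℝ)), x < 1 :=
      eventually_nhdsWithin_of_eventually_nhds (eventually_lt_nhds one_pos)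
    filter_upwards [hmem, hlt] with x hx hx1
    have := hφ.secant_mono (a := 0) (x := x) (y := 1) trivial trivial trivial
      (ne_of_gt hx) one_ne_zero (le_of_lt hx1)
    simpa [slope, div_eq_inv_mul] using this
  have hle : s ≤ φ 1 - φ 0 := le_of_tendsto h2 hev
  linarith

/-- Gradient inequality for a convex function. -/
private lemma grad_ineq_aux {n : ℕ} {C : (Fin n → ℝ) → ℝ} {g : (Fin n → ℝ) → (Fin n → ℝ)}
    (hconv : ConvexOn ℝ Set.univ C)
    (hgrad : ∀ p v : Fin n → ℝ,
      HasDerivAt (fun t : ℝ => C (p + t • v)) (∑ i, g p i * v i) 0)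
    (p v : Fin n → ℝ) : C p + ∑ i, g p i * v i ≤ C (p + v) := by
  set φ : ℝ → ℝ := fun t => C (p + t • v) with hφdef
  have hφeq : φ = C ∘ (AffineMap.lineMap p (p + v)) := by
    funext t
    simp only [hφdef, Function.comp, AffineMap.lineMap_apply_module]
    congr 1
    module
  have hφ : ConvexOn ℝ Set.univ φ := by
    have := hconv.comp_affineMap (AffineMap.lineMap p (p + v))
    rw [Set.preimage_univ] at this
    rw [hφeq]; exact this
  have h := convex_deriv_le_aux hφ (hgrad p v)
  simpa [hφdef] using h

/-- Existence of a flow along the incidence matrix realizing `eᵢ - eⱼ` when `j` is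
reachable from `i`. -/
private lemma exists_flow_aux {n m : ℕ} {tail head : Fin m → Fin n}
    (hth : ∀ e, tail e ≠ head e)
    {D : Matrix (Fin n) (Fin m) ℝ}
    (hD : ∀ i e, D i e = if tail e = i then 1 else if head e = i then -1 else 0)
    {i j : Fin n}
    (h : Relation.ReflTransGen
      (fun a b => ∃ e, (tail e = a ∧ head e = b) ∨ (tail e = b ∧ head e = a)) i j) :
    ∃ ν : Fin m → ℝ, D.mulVec ν = Pi.single i 1 - Pi.single j 1 := by
  have hcol : ∀ e, D.mulVec (Pi.single e 1) = Pi.single (tail e) 1 - Pi.single (head e) 1 := by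
    intro e
    funext k
    have : D.mulVec (Pi.single e 1) k = D k e := by
      simp [Matrix.mulVec, dotProduct, Pi.single_apply, mul_ite]
    rw [this, hD]
    have hne := hth e
    simp only [Pi.sub_apply, Pi.single_apply]
    by_cases h1 : tail e = k <;> by_cases h2 : head e = k <;>
      simp_all [eq_comm]
  induction h with
  | refl => exact ⟨0, by simp⟩
  | tail _ hbc ih =>
    obtain ⟨ν, hν⟩ := ih
    obtain ⟨e, he⟩ := hbc
    rcases he with ⟨ht, hh⟩ | ⟨ht, hh⟩
    · refine ⟨ν + Pi.single e 1, ?_⟩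
      rw [Matrix.mulVec_add, hν, hcol, ht, hh]; abel
    · refine ⟨ν - Pi.single e 1, ?_⟩
      rw [Matrix.mulVec_sub, hν, hcol, ht, hh]; abel

/-- Computation of `Dᵀ λ` for the incidence matrix. -/
private lemma DT_apply_aux {n m : ℕ} {tail head : Fin m → Fin n}
    (hth : ∀ e, tail e ≠ head e)
    {D : Matrix (Fin n) (Fin m) ℝ}
    (hD : ∀ i e, D i e = if tail e = i then 1 else if head e = i then -1 else 0)
    (lam : Fin n → ℝ) (e : Fin m) :
    Dᵀ.mulVec lam e = lam (tail e) - lam (head e) := by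
  have key : ∀ i, Dᵀ e i * lam i
      = (if tail e = i then lam i else 0) + (if head e = i then -lam i else 0) := by
    intro i
    rw [Matrix.transpose_apply, hD]
    have hne := hth e
    by_cases h1 : tail e = i <;> by_cases h2 : head e = i <;> simp_all
  simp only [Matrix.mulVec, dotProduct, key, Finset.sum_add_distrib, Finset.sum_ite_eq,
    Finset.mem_univ, if_true]
  ring

/-- For `C` convex and differentiable (with gradient `g`), `D` the
incidence matrix of a connected graph on `n` nodes, and `d` with `1ᵀd = 0`,
a point `p⋆` minimizes `C` over `{p : 1ᵀp = 1ᵀd}` iff there exist `λ` and `ν`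
with `∇C(p⋆) = λ`, `Dᵀλ = 0` and `Dν = p⋆ - d`.  In particular the distributed
problem (OP2) is an exact relaxation of the centralized problem (OP1): every
KKT point of (OP2) is optimal for (OP1). -/
theorem kkt_iff_optimal_connected
    (n m : ℕ) (C : (Fin n → ℝ) → ℝ) (g : (Fin n → ℝ) → (Fin n → ℝ))
    (hconv : ConvexOn ℝ Set.univ C)
    (hgrad : ∀ p v : Fin n → ℝ,
      HasDerivAt (fun t : ℝ => C (p + t • v)) (∑ i, g p i * v i) 0)
    (tail head : Fin m → Fin n)
    (hth : ∀ e, tail e ≠ head e)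
    (hconn : ∀ i j : Fin n, Relation.ReflTransGen
      (fun a b => ∃ e, (tail e = a ∧ head e = b) ∨ (tail e = b ∧ head e = a)) i j)
    (D : Matrix (Fin n) (Fin m) ℝ)
    (hD : ∀ i e, D i e = if tail e = i then 1 else if head e = i then -1 else 0)
    (d : Fin n → ℝ) (hd : ∑ i, d i = 0)
    (pstar : Fin n → ℝ) (hfeas : ∑ i, pstar i = ∑ i, d i) :
    (∀ p : Fin n → ℝ, (∑ i, p i = ∑ i, d i) → C pstar ≤ C p) ↔
      ∃ (lam : Fin n → ℝ) (ν : Fin m → ℝ),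
        g pstar = lam ∧ Dᵀ.mulVec lam = 0 ∧ D.mulVec ν = pstar - d := by
  constructor
  · intro hopt
    -- the directional derivative vanishes along every direction with zero sum
    have hzero : ∀ v : Fin n → ℝ, (∑ i, v i = 0) → ∑ i, g pstar i * v i = 0 := by
      intro v hv
      have hmin : IsLocalMin (fun t : ℝ => C (pstar + t • v)) 0 := by
        apply Filter.Eventually.of_forall
        intro t
        have hfe : ∑ i, (pstar + t • v) i = ∑ i, d i := by
          simp only [Pi.add_apply, Pi.smul_apply, smul_eq_mul, Finset.sum_add_distrib,
            ← Finset.mul_sum, hv, hfeas, mul_zero, add_zero]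
        have := hopt _ hfe
        simpa using this
      exact hmin.hasDerivAt_eq_zero (hgrad pstar v)
    have hconst : ∀ i j : Fin n, g pstar i = g pstar j := by
      intro i j
      by_cases hij : i = j
      · rw [hij]
      have hv : ∑ k, (Pi.single i 1 - Pi.single j 1 : Fin n → ℝ) k = 0 := by
        simp [Finset.sum_sub_distrib, Pi.single_apply]
      have h0 := hzero _ hv
      simp only [Pi.sub_apply, Pi.single_apply, mul_sub, Finset.sum_sub_distrib,
        mul_ite, mul_one, mul_zero, Finset.sum_ite_eq', Finset.mem_univ, if_true] at h0
      linarith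
    have hw : ∑ i, (pstar i - d i) = 0 := by
      simp only [Finset.sum_sub_distrib, hfeas, sub_self]
    obtain ⟨ν, hν⟩ : ∃ ν : Fin m → ℝ, D.mulVec ν = pstar - d := by
      rcases Nat.eq_zero_or_pos n with hn | hn
      · subst hn
        exact ⟨0, funext fun i => Fin.elim0 i⟩
      · set i0 : Fin n := ⟨0, hn⟩
        choose ν' hν' using fun j => exists_flow_aux hth hD (hconn j i0)
        refine ⟨∑ j, (pstar j - d j) • ν' j, ?_⟩
        have hlin : D.mulVec (∑ j, (pstar j - d j) • ν' j)
            = ∑ j, (pstar j - d j) • (Pi.single j 1 - Pi.single i0 1) := by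
          have h1 : D.mulVec (∑ j, (pstar j - d j) • ν' j)
              = ∑ j, (pstar j - d j) • (D.mulVec (ν' j)) := by
            rw [← Matrix.mulVecLin_apply, map_sum]
            simp only [_root_.map_smul, Matrix.mulVecLin_apply]
          rw [h1]
          simp only [hν']
        rw [hlin]
        funext k
        simp only [Finset.sum_apply, Pi.smul_apply, Pi.sub_apply, Pi.single_apply,
          smul_eq_mul, mul_sub]
        rw [Finset.sum_sub_distrib]
        have A : ∑ j, (pstar j - d j) * (if k = j then (1:ℝ) else 0) = pstar k - d k := by
          simp [mul_ite, mul_one, mul_zero, Finset.sum_ite_eq]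
        have B : ∑ j, (pstar j - d j) * (if k = i0 then (1:ℝ) else 0) = 0 := by
          rw [← Finset.sum_mul, hw, zero_mul]
        rw [A, B, sub_zero]
    refine ⟨g pstar, ν, rfl, ?_, hν⟩
    funext e
    rw [DT_apply_aux hth hD, hconst (tail e) (head e)]
    simp
  · rintro ⟨lam, ν, hg, hDt, -⟩ p hp
    have hlc : ∀ e, lam (tail e) = lam (head e) := by
      intro e
      have := congrFun hDt e
      rw [DT_apply_aux hth hD] at this
      have : lam (tail e) - lam (head e) = 0 := this
      linarith
    have hconst : ∀ i j : Fin n, lam i = lam j := by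
      intro i j
      induction hconn i j with
      | refl => rfl
      | tail _ hbc ih =>
        obtain ⟨e, he⟩ := hbc
        rcases he with ⟨ht, hh⟩ | ⟨ht, hh⟩
        · rw [ih, ← ht, ← hh]; exact hlc e
        · rw [ih, ← ht, ← hh]; exact (hlc e).symm
    have key := grad_ineq_aux hconv hgrad pstar (p - pstar)
    rw [add_sub_cancel] at key
    have hsum : ∑ i, g pstar i * (p - pstar) i = 0 := by
      rw [hg]
      rcases Nat.eq_zero_or_pos n with hn | hn
      · subst hn; simp
      · set i0 : Fin n := ⟨0, hn⟩
        calc ∑ i, lam i * (p - pstar) i = ∑ i, lam i0 * (p - pstar) i := by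
              refine Finset.sum_congr rfl fun i _ => ?_
              rw [hconst i i0]
          _ = lam i0 * ∑ i, (p i - pstar i) := by rw [Finset.mul_sum]; rfl
          _ = 0 := by
              rw [Finset.sum_sub_distrib, hp, hfeas, sub_self, mul_zero]
    linarith
end

section
/- Consider the shifted dynamics ẋ = J ∇H̄(x) - [𝓡(z(x)) - 𝓡(z(x̄))] where J is skew-symmetric, z(x) = ∇H(x), and H̄ is the Bregman shift of a convex differentiable H at x̄. If the shifted passivity property (z - z̄)ᵀ(𝓡(z) - 𝓡(z̄)) ≥ 0 holds for all x (with z = ∇H(x), z̄ = ∇H(x̄)), then dH̄/dt ≤ 0 along trajectories, i.e., H̄ is nonincreasing. -/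
open scoped RealInnerProductSpace

/-- Along the shifted dynamics
`ẋ = J ∇H̄(x) - [𝓡(z(x)) - 𝓡(z(x̄))]` with `J` skew-symmetric, `z = ∇H` and
`H̄` the Bregman shift of the convex differentiable `H` at `x̄`, the shifted
passivity property `⟪z - z̄, 𝓡(z) - 𝓡(z̄)⟫ ≥ 0` implies that `H̄` is
nonincreasing along trajectories. -/
theorem shifted_passivity_hamiltonian_nonincreasing
    (n : ℕ) (H : EuclideanSpace ℝ (Fin n) → ℝ)
    (hconv : ConvexOn ℝ Set.univ H) (hdiff : Differentiable ℝ H)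
    (J : Matrix (Fin n) (Fin n) ℝ) (hJ : J.transpose = -J)
    (R : EuclideanSpace ℝ (Fin n) → EuclideanSpace ℝ (Fin n))
    (xbar : EuclideanSpace ℝ (Fin n))
    (Hbar : EuclideanSpace ℝ (Fin n) → ℝ)
    (hHbar : Hbar = fun y => H y - ⟪y - xbar, gradient H xbar⟫ - H xbar)
    (hpass : ∀ y : EuclideanSpace ℝ (Fin n),
      0 ≤ ⟪gradient H y - gradient H xbar, R (gradient H y) - R (gradient H xbar)⟫)
    (x : ℝ → EuclideanSpace ℝ (Fin n))
    (hx : ∀ t : ℝ, HasDerivAt x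
      (Matrix.toEuclideanLin J (gradient Hbar (x t))
        - (R (gradient H (x t)) - R (gradient H xbar))) t) :
    ∀ s t : ℝ, s ≤ t → Hbar (x t) ≤ Hbar (x s) := by
  set c := gradient H xbar with hc
  -- Hbar has gradient (∇H y - c) at every y
  have hgradHbar : ∀ y, HasGradientAt Hbar (gradient H y - c) y := by
    intro y
    rw [hasGradientAt_iff_hasFDerivAt]
    have h1 : HasFDerivAt H (InnerProductSpace.toDual ℝ _ (gradient H y)) y :=
      ((hdiff y).hasGradientAt).hasFDerivAt
    have h2 : HasFDerivAt (fun z : EuclideanSpace ℝ (Fin n) => ⟪z - xbar, c⟫)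
        (InnerProductSpace.toDual ℝ _ c) y := by
      have : (fun z : EuclideanSpace ℝ (Fin n) => ⟪z - xbar, c⟫)
          = fun z => (InnerProductSpace.toDual ℝ _ c) z - ⟪xbar, c⟫ := by
        funext z
        simp [InnerProductSpace.toDual_apply_apply, real_inner_comm, inner_sub_left, mul_comm]
      rw [this]
      exact ((InnerProductSpace.toDual ℝ _ c).hasFDerivAt).sub_const _
    have := (h1.sub h2).sub_const (H xbar)
    rw [hHbar]
    convert this using 1
    · rfl
    · rfl
    · ext v
      simp [inner_sub_left]
    · exact map_sub _ _ _
  have hgrad_eq : ∀ y, gradient Hbar y = gradient H y - c :=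
    fun y => (hgradHbar y).gradient
  -- derivative of Hbar ∘ x
  have key : ∀ t : ℝ, HasDerivAt (fun t => Hbar (x t))
      (⟪gradient H (x t) - c,
        (Matrix.toEuclideanLin J (gradient Hbar (x t))
          - (R (gradient H (x t)) - R (gradient H xbar)))⟫) t := by
    intro t
    have hF := (hgradHbar (x t)).hasFDerivAt
    have := hF.comp_hasDerivAt t (hx t)
    exact this
  -- the derivative is nonpositive
  have hnonpos : ∀ t : ℝ,
      (⟪gradient H (x t) - c,
        (Matrix.toEuclideanLin J (gradient Hbar (x t))
          - (R (gradient H (x t)) - R (gradient H xbar)))⟫ : ℝ) ≤ 0 := by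
    intro t
    set g := gradient H (x t) - c with hg
    have hskew : ⟪g, Matrix.toEuclideanLin J g⟫ = (0 : ℝ) := by
      have hadj : LinearMap.adjoint (Matrix.toEuclideanLin J) = Matrix.toEuclideanLin (-J) := by
        rw [← Matrix.toEuclideanLin_conjTranspose_eq_adjoint,
          Matrix.conjTranspose_eq_transpose_of_trivial, hJ]
      have h1 : ⟪g, Matrix.toEuclideanLin J g⟫
          = ⟪Matrix.toEuclideanLin (-J) g, g⟫ := by
        rw [← hadj]; exact (LinearMap.adjoint_inner_left _ _ _).symm
      rw [map_neg, LinearMap.neg_apply, inner_neg_left,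
        real_inner_comm] at h1
      linarith [real_inner_comm g (Matrix.toEuclideanLin J g), h1]
    rw [hgrad_eq, ← hg, inner_sub_right, hskew,
      show R (gradient H xbar) = R c from rfl]
    have := hpass (x t)
    rw [← hg] at this
    linarith
  -- conclude antitone
  have hanti : Antitone (fun t => Hbar (x t)) := by
    apply antitone_of_deriv_nonpos
    · exact fun t => (key t).differentiableAt
    · intro t
      rw [(key t).deriv]
      exact hnonpos t
  exact fun s t hst => hanti hst
end
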